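/- arXiv:2305.08331 — 3 statements merged into one kernel-verified Lean document; each statement's English description precedes it below -/
import Mathlib

section
/- Let H be a C4-free Halin graph with characteristic tree T, and let L = (v0, v1, …, vk) be a longest path in T. Then each semi-pendant vertex of L is a branching vertex of T adjacent to exactly two leaves of T; in particular, v1 has exactly two leaf neighbors (one of which is v0), its only non-leaf neighbor is v2, and d_T(v1) = 3, and symmetrically for v_{k−1}. -/
/-!
Let `v₀ v₁ … v_k` be a longest path of `T`. By maximality every neighbour of `v₁` other than
`v₂` (in particular `v₀`) is a leaf hanging off `v₁`. If `k = 2` this makes `T` a star, whose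
leaves are all the vertices of `C`; if `k ≥ 3` then `v₂` is not a leaf and planarity at the
edge `v₁v₂` says that the leaf neighbours of `v₁` are consecutive on `C`. Either way, three
consecutive leaves `a b c` on `C` adjacent to one tree vertex `v` give the `4`-cycle `v a b c`.
So `k ≥ 3` and `v₁` has at most two leaf neighbours; as `d_T(v₁) ≥ 3` and all but one
neighbour of `v₁` are leaves, it has exactly two and degree three.
-/

open SimpleGraph

/-- Degree of a vertex as the `ncard` of its neighbour set. -/
noncomputable def ncDeg {V : Type*} (G : SimpleGraph V) (v : V) : ℕ :=
  (G.neighborSet v).ncard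

/-- A leaf is a vertex of degree one. -/
def IsLeaf {V : Type*} (G : SimpleGraph V) (v : V) : Prop :=
  ncDeg G v = 1

/-- A Halin graph, presented by its characteristic tree `T` and outer cycle `C`.
The underlying graph is `T ⊔ C`.  The outer cycle is a `2`-regular connected graph
whose support is exactly the set of leaves of `T`, every non-leaf of `T` has degree
at least three, and the cycle is compatible with a planar embedding: for every edge
`uv` of `T`, the leaves lying in each component of `T - uv` are consecutive on the
cycle, i.e. they induce a connected subgraph of the cycle. -/
structure HalinGraph (V : Type*) [Fintype V] : Type _ where
  /-- the characteristic tree -/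
  T : SimpleGraph V
  /-- the outer cycle -/
  C : SimpleGraph V
  tree_isTree : T.IsTree
  four_le_card : 4 ≤ Fintype.card V
  nonleaf_degree : ∀ v : V, ¬ IsLeaf T v → 3 ≤ ncDeg T v
  support_C : C.support = {v : V | IsLeaf T v}
  two_regular : ∀ v ∈ C.support, ncDeg C v = 2
  cycle_connected : (C.induce C.support).Connected
  planar : ∀ u v : V, T.Adj u v →
    (C.induce {x : V | IsLeaf T x ∧ (T.deleteEdges {s(u, v)}).Reachable u x}).Connected

/-- The Halin graph itself: the (edge-disjoint) union of the tree and the outer cycle. -/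
def HalinGraph.graph {V : Type*} [Fintype V] (H : HalinGraph V) : SimpleGraph V :=
  H.T ⊔ H.C

/-- Number of edges of a graph. -/
noncomputable def eCount {V : Type*} (G : SimpleGraph V) : ℕ :=
  G.edgeSet.ncard

/-- A graph is `C₄`-free iff it contains no cycle of length `4`. -/
def C4Free {V : Type*} (G : SimpleGraph V) : Prop :=
  ∀ (v : V) (w : G.Walk v v), w.IsCycle → w.length ≠ 4

/-- A semi-branching vertex of the characteristic tree: a non-leaf with at least one
leaf neighbour and at least two non-leaf neighbours. -/
def SemiBranching {V : Type*} (T : SimpleGraph V) (v : V) : Prop :=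
  ¬ IsLeaf T v ∧ (∃ x, T.Adj v x ∧ IsLeaf T x) ∧
    ∃ x y : V, x ≠ y ∧ T.Adj v x ∧ T.Adj v y ∧ ¬ IsLeaf T x ∧ ¬ IsLeaf T y

namespace SimpleGraph

variable {V : Type*} {G : SimpleGraph V}

theorem Walk.IsPath.getVert_ne {u v : V} {p : G.Walk u v} (hp : p.IsPath) {i j : ℕ}
    (hi : i ≤ p.length) (hj : j ≤ p.length) (hij : i ≠ j) : p.getVert i ≠ p.getVert j :=
  fun h => hij (hp.getVert_injOn hi hj h)

theorem Connected.exists_adj_adj (hG : G.Connected) (hV : 2 < Nat.card V) :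
    ∃ a b c, a ≠ c ∧ G.Adj a b ∧ G.Adj b c := by
  have hfin : (Set.univ : Set V).Finite := Set.finite_of_ncard_pos (by rw [Set.ncard_univ]; omega)
  obtain ⟨x, y, z, -, -, -, hxy, hxz, hyz⟩ :=
    (Set.two_lt_ncard_iff hfin).1 (by rwa [Set.ncard_univ])
  have adj_or : ∀ u v, u ≠ v → G.Adj u v ∨ ∃ a b c, a ≠ c ∧ G.Adj a b ∧ G.Adj b c := by
    intro u v huv
    obtain ⟨p, hp⟩ := hG.exists_isPath u v
    by_cases h1 : p.length = 1
    · exact .inl (Walk.adj_of_length_eq_one h1)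
    have h2 : 2 ≤ p.length := by
      have : p.length ≠ 0 := mt Walk.eq_of_length_eq_zero huv
      omega
    exact .inr ⟨_, _, _, hp.getVert_ne (by omega) h2 (by omega),
      p.adj_getVert_succ (by omega), p.adj_getVert_succ (by omega)⟩
  rcases adj_or x y hxy with hxy | h
  · rcases adj_or y z hyz with hyz | h
    · exact ⟨x, y, z, hxz, hxy, hyz⟩
    · exact h
  · exact h

theorem Reachable.eq_or_adj_of_forall_neighborSet_subset {v x : V}
    (h : ∀ w, G.Adj v w → G.neighborSet w ⊆ {v}) (hx : G.Reachable v x) : x = v ∨ G.Adj v x := by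
  rw [reachable_iff_reflTransGen] at hx
  induction hx with
  | refl => exact .inl rfl
  | tail _ hbc ih =>
    rcases ih with rfl | hvb
    · exact .inr hbc
    · exact .inl (h _ hvb hbc)

def Walk.IsLongestPath {u v : V} (p : G.Walk u v) : Prop :=
  p.IsPath ∧ ∀ (a b : V) (q : G.Walk a b), q.IsPath → q.length ≤ p.length

namespace Walk.IsLongestPath

variable {u v : V} {p : G.Walk u v}

theorem reverse (hp : p.IsLongestPath) : p.reverse.IsLongestPath :=
  ⟨hp.1.reverse, fun a b q hq => (length_reverse p).symm ▸ hp.2 a b q hq⟩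

theorem two_le_length (hp : p.IsLongestPath) (hG : G.Connected) (hV : 2 < Nat.card V) :
    2 ≤ p.length := by
  obtain ⟨a, b, c, hac, hab, hbc⟩ := hG.exists_adj_adj hV
  have hq : (cons hab (cons hbc nil)).IsPath := by simp [hab.ne, hac, hbc.ne]
  simpa using hp.2 _ _ _ hq

theorem neighborSet_start_subset (hp : p.IsLongestPath) (hG : G.IsAcyclic) :
    G.neighborSet u ⊆ {p.snd} := by
  intro c hc
  by_cases hmem : c ∈ p.support
  · exact hG.eq_snd_of_adj_start hp.1 hc hmem
  · have := hp.2 _ _ _ (hp.1.cons hmem (h := G.adj_symm hc))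
    simp at this

/-- A neighbour `x ≠ p.getVert 2` of `p.snd` is the start of the longest path `x, p.snd, …, v`. -/
theorem neighborSet_subset_of_adj_snd (hp : p.IsLongestPath) (hG : G.IsAcyclic) {x : V}
    (hx : G.Adj p.snd x) (hx2 : x ≠ p.getVert 2) : G.neighborSet x ⊆ {p.snd} := by
  have hxt : x ∉ p.tail.support := fun hmem =>
    hx2 (by simpa using hG.eq_snd_of_adj_start hp.1.tail hx hmem)
  have hq : (cons hx.symm p.tail).IsLongestPath :=
    ⟨hp.1.tail.cons hxt, fun a b q hq => (hp.2 a b q hq).trans (by simp [length_tail]; omega)⟩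
  simpa using hq.neighborSet_start_subset hG

end Walk.IsLongestPath

end SimpleGraph

section

variable {V : Type*} {G : SimpleGraph V}

theorem isLeaf_of_neighborSet_subset {x v : V} (hxv : G.Adj x v) (h : G.neighborSet x ⊆ {v}) :
    IsLeaf G x := by
  rw [IsLeaf, ncDeg, h.antisymm (Set.singleton_subset_iff.2 hxv), Set.ncard_singleton]

theorem IsLeaf.eq_of_adj {x a b : V} (hx : IsLeaf G x) (ha : G.Adj x a) (hb : G.Adj x b) :
    a = b := by
  obtain ⟨c, hc⟩ := Set.ncard_eq_one.1 hx
  have ha' : a ∈ G.neighborSet x := ha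
  have hb' : b ∈ G.neighborSet x := hb
  rw [hc] at ha' hb'
  exact ha'.trans hb'.symm

theorem SimpleGraph.Walk.IsPath.not_isLeaf_getVert {u v : V} {p : G.Walk u v} (hp : p.IsPath)
    {i : ℕ} (h0 : 0 < i) (hi : i < p.length) : ¬IsLeaf G (p.getVert i) := by
  intro h
  have hprev : G.Adj (p.getVert i) (p.getVert (i - 1)) := by
    simpa [Nat.sub_add_cancel h0] using (p.adj_getVert_succ (i := i - 1) (by omega)).symm
  exact hp.getVert_ne (by omega) (by omega) (by omega)
    (h.eq_of_adj hprev (p.adj_getVert_succ hi))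

theorem C4Free.eq_or_eq_of_adj (hG : C4Free G) {a b c d : V} (hab : G.Adj a b)
    (hbc : G.Adj b c) (hcd : G.Adj c d) (hda : G.Adj d a) : a = c ∨ b = d := by
  by_contra! h
  refine hG a (.cons hab (.cons hbc (.cons hcd (.cons hda .nil)))) ?_ rfl
  rw [Walk.cons_isCycle_iff]
  simp [hab.ne, hbc.ne, hcd.ne, hda.ne, hab.ne', hda.ne', h.1, h.2, Ne.symm h.1]

/-- Deleting `vu` leaves only `v` and its other, pendant, neighbours in the component of `v`. -/
theorem setOf_isLeaf_reachable_deleteEdges {v u : V} (hv : ¬IsLeaf G v) (hu : ¬IsLeaf G u)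
    (h : ∀ w, G.Adj v w → w ≠ u → G.neighborSet w ⊆ {v}) :
    {x | IsLeaf G x ∧ (G.deleteEdges {s(v, u)}).Reachable v x} = {x | G.Adj v x ∧ IsLeaf G x} := by
  ext x
  constructor
  · rintro ⟨hx, hreach⟩
    have hpend : ∀ w, (G.deleteEdges {s(v, u)}).Adj v w →
        (G.deleteEdges {s(v, u)}).neighborSet w ⊆ {v} := by
      intro w hw y hy
      rw [mem_neighborSet, deleteEdges_adj] at hy
      rw [deleteEdges_adj] at hw
      exact h w hw.1 (by rintro rfl; exact hw.2 rfl) hy.1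
    rcases hreach.eq_or_adj_of_forall_neighborSet_subset hpend with rfl | hvx
    · exact absurd hx hv
    · exact ⟨(deleteEdges_adj.1 hvx).1, hx⟩
  · rintro ⟨hvx, hx⟩
    refine ⟨hx, Adj.reachable (deleteEdges_adj.2 ⟨hvx, ?_⟩)⟩
    rw [Set.mem_singleton_iff, Sym2.congr_right]
    rintro rfl
    exact hu hx

end

namespace HalinGraph

variable {V : Type*} [Fintype V] (H : HalinGraph V)

theorem ncard_le_two_of_connected (hfree : C4Free H.graph) {v : V} {S : Set V}
    (hS : S ⊆ H.T.neighborSet v) (hconn : (H.C.induce S).Connected) : S.ncard ≤ 2 := by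
  by_contra! h
  obtain ⟨a, b, c, hac, hab, hbc⟩ := hconn.exists_adj_adj (by rwa [Nat.card_coe_set_eq])
  rcases hfree.eq_or_eq_of_adj (Or.inl (hS a.2)) (Or.inr hab) (Or.inr hbc)
      (Or.inl (H.T.adj_symm (hS c.2))) with hvb | hac'
  · exact (hS b.2).ne hvb
  · exact hac (Subtype.ext hac')

/-- The characteristic tree of a `C₄`-free Halin graph is not a star. -/
theorem not_forall_neighborSet_subset (hfree : C4Free H.graph) (v : V) :
    ¬∀ w, H.T.Adj v w → H.T.neighborSet w ⊆ {v} := by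
  intro h
  have hN : H.T.neighborSet v = {v}ᶜ := by
    ext x
    refine ⟨fun hx => hx.ne', fun hx => ?_⟩
    rcases (H.tree_isTree.connected.preconnected v x).eq_or_adj_of_forall_neighborSet_subset h
      with rfl | hvx
    · exact absurd rfl hx
    · exact hvx
  have hdeg : 3 ≤ (H.T.neighborSet v).ncard := by
    rw [hN, Set.ncard_compl, Set.ncard_singleton, Nat.card_eq_fintype_card]
    have := H.four_le_card
    omega
  have hsupp : H.C.support = H.T.neighborSet v := by
    rw [H.support_C]
    ext x
    refine ⟨fun hx => ?_, fun hx => isLeaf_of_neighborSet_subset (H.T.adj_symm hx) (h x hx)⟩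
    rw [hN]
    rintro rfl
    rw [Set.mem_ofPred_eq, IsLeaf, ncDeg] at hx
    omega
  have hconn : (H.C.induce (H.T.neighborSet v)).Connected := hsupp ▸ H.cycle_connected
  have := H.ncard_le_two_of_connected hfree subset_rfl hconn
  omega

variable {H} {u v : V} {L : H.T.Walk u v}

theorem two_le_length (hL : L.IsLongestPath) : 2 ≤ L.length :=
  hL.two_le_length H.tree_isTree.connected (by
    rw [Nat.card_eq_fintype_card]
    have := H.four_le_card
    omega)

theorem isLeaf_start (hL : L.IsLongestPath) : IsLeaf H.T u ∧ H.T.Adj L.snd u := by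
  have hadj : H.T.Adj u L.snd := by
    simpa using L.adj_getVert_succ (show 0 < L.length by have := two_le_length hL; omega)
  exact ⟨isLeaf_of_neighborSet_subset hadj (hL.neighborSet_start_subset H.tree_isTree.isAcyclic),
    hadj.symm⟩

theorem eq_getVert_two_of_adj_snd (hL : L.IsLongestPath) {x : V} (hx : H.T.Adj L.snd x)
    (hxl : ¬IsLeaf H.T x) : x = L.getVert 2 := by
  by_contra hx2
  exact hxl (isLeaf_of_neighborSet_subset hx.symm
    (hL.neighborSet_subset_of_adj_snd H.tree_isTree.isAcyclic hx hx2))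

theorem neighborSet_snd (hL : L.IsLongestPath) :
    H.T.neighborSet L.snd = insert (L.getVert 2) {x | H.T.Adj L.snd x ∧ IsLeaf H.T x} := by
  ext x
  refine ⟨fun hx => ?_, ?_⟩
  · by_cases hxl : IsLeaf H.T x
    · exact .inr ⟨hx, hxl⟩
    · exact .inl (eq_getVert_two_of_adj_snd hL hx hxl)
  · rintro (rfl | hx)
    · exact L.adj_getVert_succ (by have := two_le_length hL; omega)
    · exact hx.1

theorem three_le_length (hfree : C4Free H.graph) (hL : L.IsLongestPath) : 3 ≤ L.length := by
  by_contra! h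
  have hk : L.length = 2 := le_antisymm (by omega) (two_le_length hL)
  refine H.not_forall_neighborSet_subset hfree L.snd fun w hw => ?_
  by_cases hw2 : w = L.getVert 2
  · have hend := hL.reverse.neighborSet_start_subset H.tree_isTree.isAcyclic
    rw [Walk.snd, Walk.getVert_reverse, hk] at hend
    rwa [hw2, ← hk, L.getVert_length]
  · exact hL.neighborSet_subset_of_adj_snd H.tree_isTree.isAcyclic hw hw2

theorem ncDeg_snd (hfree : C4Free H.graph) (hL : L.IsLongestPath) :
    ncDeg H.T L.snd = {x | H.T.Adj L.snd x ∧ IsLeaf H.T x}.ncard + 1 := by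
  have hv2 : ¬IsLeaf H.T (L.getVert 2) :=
    hL.1.not_isLeaf_getVert (by omega) (by have := three_le_length hfree hL; omega)
  rw [ncDeg, neighborSet_snd hL, Set.ncard_insert_of_notMem fun h => hv2 h.2]

theorem ncard_setOf_adj_snd_isLeaf (hfree : C4Free H.graph) (hL : L.IsLongestPath) :
    {x | H.T.Adj L.snd x ∧ IsLeaf H.T x}.ncard = 2 := by
  have hk := three_le_length hfree hL
  have hv1 : ¬IsLeaf H.T L.snd := hL.1.not_isLeaf_getVert (by omega) (by omega)
  have hv2 : ¬IsLeaf H.T (L.getVert 2) := hL.1.not_isLeaf_getVert (by omega) (by omega)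
  have hconn := H.planar L.snd (L.getVert 2) (L.adj_getVert_succ (by omega))
  rw [setOf_isLeaf_reachable_deleteEdges hv1 hv2
    fun _ => hL.neighborSet_subset_of_adj_snd H.tree_isTree.isAcyclic] at hconn
  have hle := H.ncard_le_two_of_connected hfree (fun x hx => hx.1) hconn
  have hdeg := H.nonleaf_degree _ hv1
  rw [ncDeg_snd hfree hL] at hdeg
  omega

theorem branching_snd (hfree : C4Free H.graph) (hL : L.IsLongestPath) :
    {x | H.T.Adj L.snd x ∧ IsLeaf H.T x}.ncard = 2 ∧ IsLeaf H.T u ∧ H.T.Adj L.snd u ∧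
      (∀ x, H.T.Adj L.snd x → ¬IsLeaf H.T x → x = L.getVert 2) ∧ ncDeg H.T L.snd = 3 := by
  have hS := ncard_setOf_adj_snd_isLeaf hfree hL
  refine ⟨hS, (isLeaf_start hL).1, (isLeaf_start hL).2,
    fun x => eq_getVert_two_of_adj_snd hL, ?_⟩
  rw [ncDeg_snd hfree hL, hS]

end HalinGraph

/-- In a `C₄`-free Halin graph, each semi-pendant vertex of a longest path `L` of the
characteristic tree is a branching vertex adjacent to exactly two leaves: `v₁` has
exactly two leaf neighbours (one of which is `v₀`), its only non-leaf neighbour is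
`v₂`, and `d_T(v₁) = 3`; symmetrically for `v_{k-1}`. -/
theorem semi_pendant_branching {V : Type*} [Fintype V] (H : HalinGraph V)
    (hfree : C4Free H.graph) {v0 vk : V} (L : H.T.Walk v0 vk) (hL : L.IsPath)
    (hlong : ∀ (a b : V) (p : H.T.Walk a b), p.IsPath → p.length ≤ L.length) :
    ({x : V | H.T.Adj (L.getVert 1) x ∧ IsLeaf H.T x}.ncard = 2 ∧
      IsLeaf H.T v0 ∧ H.T.Adj (L.getVert 1) v0 ∧
      (∀ x : V, H.T.Adj (L.getVert 1) x → ¬ IsLeaf H.T x → x = L.getVert 2) ∧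
      ncDeg H.T (L.getVert 1) = 3) ∧
    ({x : V | H.T.Adj (L.getVert (L.length - 1)) x ∧ IsLeaf H.T x}.ncard = 2 ∧
      IsLeaf H.T vk ∧ H.T.Adj (L.getVert (L.length - 1)) vk ∧
      (∀ x : V, H.T.Adj (L.getVert (L.length - 1)) x → ¬ IsLeaf H.T x →
        x = L.getVert (L.length - 2)) ∧
      ncDeg H.T (L.getVert (L.length - 1)) = 3) := by
  have hL' : L.IsLongestPath := ⟨hL, hlong⟩
  have hrev := H.branching_snd hfree hL'.reverse
  simp only [Walk.snd, Walk.getVert_reverse] at hrev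
  exact ⟨H.branching_snd hfree hL', hrev⟩
end

section
/- Let H = T ∪ C be a Halin graph and let u1 and u2 be leaves of T with u1u2 ∈ E(C). Then every cycle 𝒞 in H containing the edge u1u2 has length at least d_T(u1, u2) + 1, i.e., at least the size of the bounded face of H incident to u1u2. -/
open SimpleGraph

/-!
Let `t₀ = u₁, …, t_k = u₂` be the path from `u₁` to `u₂` in `T`, so `k = d_T(u₁, u₂)`, and let `Sᵢ`
be the side of `u₁` of its edge `tᵢtᵢ₊₁`. These sides are nested, and an edge of `H` other than
`u₁u₂` leaves at most one of them. For a tree edge this holds because `tᵢtᵢ₊₁` is the only tree edge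
leaving `Sᵢ`. For an outer-cycle edge `ab` leaving `Sᵢ ⊆ Sⱼ`, planarity makes the leaves of `Sᵢ` and
of `Sⱼ` arcs of the outer cycle, both bounded by `u₁u₂` and `ab`, hence equal; but the degree
condition puts a leaf in `Sⱼ \ Sᵢ`. A cycle through `u₁u₂` minus that edge is a walk from `u₁` to
`u₂` that must leave every `Sᵢ` through a different edge, so it has at least `k` edges.
-/

open Finset

namespace SimpleGraph

variable {V : Type*} {G : SimpleGraph V}

section Boundary

theorem ncard_boundary_le_two [Finite V] {A : Set V} (hA : (G.induce A).Connected)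
    (hdeg : ∀ v ∈ A, (G.neighborSet v).ncard = 2) :
    {p : V × V | p.1 ∈ A ∧ p.2 ∉ A ∧ G.Adj p.1 p.2}.ncard ≤ 2 := by
  classical
  have := Fintype.ofFinite V
  set out : A → Finset V := fun v => G.neighborFinset v \ A.toFinset
  have hsplit (v : A) : (G.induce A).degree v + #(out v) = 2 := by
    rw [← card_neighborFinset_eq_degree, ← card_map, map_neighborFinset_induce,
      card_inter_add_card_sdiff, card_neighborFinset_eq_degree, ← hdeg v v.2,
      Set.ncard_eq_toFinset_card', Set.toFinset_card, card_neighborSet_eq_degree]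
  have hsum : 2 * #(G.induce A).edgeFinset + ∑ v, #(out v) = 2 * Fintype.card A := by
    rw [← sum_degrees_eq_twice_card_edges, ← sum_add_distrib, Finset.sum_congr rfl
      fun v _ => hsplit v, sum_const, card_univ, smul_eq_mul, mul_comm]
  have hcard := hA.card_vert_le_card_edgeSet_add_one
  rw [Nat.card_eq_fintype_card, Nat.card_eq_fintype_card, ← edgeFinset_card] at hcard
  have hboundary :
      {p : V × V | p.1 ∈ A ∧ p.2 ∉ A ∧ G.Adj p.1 p.2}.ncard ≤ ∑ v, #(out v) := by
    calc _ ≤ #(univ.biUnion fun v : A => (out v).image (Prod.mk v.1)) := by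
          rw [← Set.ncard_coe_finset]
          refine Set.ncard_le_ncard (fun p hp => ?_)
          simp only [coe_biUnion, coe_image, Set.mem_iUnion, Set.mem_image, out, coe_sdiff,
            Set.coe_toFinset, mem_coe, mem_univ, Set.iUnion_true]
          exact ⟨⟨p.1, hp.1⟩, p.2, ⟨by simpa using hp.2.2, hp.2.1⟩, rfl⟩
      _ ≤ ∑ v, #((out v).image (Prod.mk v.1)) := card_biUnion_le
      _ ≤ ∑ v, #(out v) := sum_le_sum fun v _ => card_image_le
  omega

/-- Two nested arcs `X ⊆ Y` of a cycle that share two boundary edges contain the same vertices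
of the cycle: otherwise a third edge would leave `X` or `Y`. -/
theorem mem_of_reachable_of_common_boundary [Finite V] {X Y : Set V} (hXY : X ⊆ Y)
    (hX : (G.induce X).Connected) (hY : (G.induce Y).Connected)
    (hdeg : ∀ v ∈ Y, (G.neighborSet v).ncard = 2) {x y x' y' : V}
    (hx : x ∈ X) (hy : y ∉ Y) (hxy : G.Adj x y) (hx' : x' ∈ X) (hy' : y' ∉ Y)
    (hxy' : G.Adj x' y') (hne : (x, y) ≠ (x', y')) {z : V} (hz : z ∈ Y)
    (hzx : G.Reachable z x) : z ∈ X := by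
  by_contra hzX
  obtain ⟨W⟩ := hzx
  obtain ⟨d, -, ⟨hpY, hpX⟩, hq⟩ := W.exists_boundary_dart (Y \ X) ⟨hz, hzX⟩ fun h => h.2 hx
  by_cases hqY : d.snd ∈ Y
  · have hqX : d.snd ∈ X := by_contra fun h => hq ⟨hqY, h⟩
    refine (ncard_boundary_le_two hX fun v hv => hdeg v (hXY hv)).not_gt
      ((Set.two_lt_ncard_iff (Set.toFinite _)).2 ⟨(x, y), (x', y'), (d.snd, d.fst),
        ⟨hx, fun h => hy (hXY h), hxy⟩, ⟨hx', fun h => hy' (hXY h), hxy'⟩,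
        ⟨hqX, hpX, d.adj.symm⟩, hne, ?_, ?_⟩)
    · rintro ⟨-, rfl⟩; exact hy hpY
    · rintro ⟨-, rfl⟩; exact hy' hpY
  · refine (ncard_boundary_le_two hY hdeg).not_gt
      ((Set.two_lt_ncard_iff (Set.toFinite _)).2 ⟨(x, y), (x', y'), (d.fst, d.snd),
        ⟨hXY hx, hy, hxy⟩, ⟨hXY hx', hy', hxy'⟩, ⟨hpY, hqY, d.adj⟩, hne, ?_, ?_⟩)
    · rintro ⟨rfl, -⟩; exact hpX hx
    · rintro ⟨rfl, -⟩; exact hpX hx'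

end Boundary

namespace Walk

theorem IsCycle.exists_walk_notMem_edges_length_lt {x u v : V} {c : G.Walk x x}
    (hc : c.IsCycle) (he : s(u, v) ∈ c.edges) :
    ∃ p : G.Walk u v, s(u, v) ∉ p.edges ∧ p.length < c.length := by
  classical
  have hu : u ∈ c.support := c.fst_mem_support_of_mem_edges he
  set c' := c.rotate u hu
  have hc' : c'.IsCycle := hc.rotate hu
  have he' : s(u, v) ∈ c'.edges := (c.rotate_edges u hu).mem_iff.2 he
  have hlen : c'.length = c.length := by
    rw [← length_edges, ← length_edges, (c.rotate_edges u hu).perm.length_eq]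
  have hv : v ∈ c'.support := c'.snd_mem_support_of_mem_edges he'
  have hsplit := c'.take_spec hv
  have hlen' : (c'.takeUntil v hv).length + (c'.dropUntil v hv).length = c.length := by
    rw [← length_append, hsplit, hlen]
  have hnodup := hc'.edges_nodup
  rw [← hsplit, edges_append, List.nodup_append] at hnodup
  by_cases hte : s(u, v) ∈ (c'.takeUntil v hv).edges
  · refine ⟨(c'.dropUntil v hv).reverse, ?_, ?_⟩
    · rw [edges_reverse, List.mem_reverse]
      exact fun hde => hnodup.2.2 _ hte _ hde rfl
    · have := (hc'.isPath_takeUntil hv).length_eq_one_of_mem_edges hte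
      rw [length_reverse]; omega
  · refine ⟨c'.takeUntil v hv, hte, ?_⟩
    have : (c'.dropUntil v hv).length ≠ 0 := fun h =>
      (c'.adj_of_mem_edges he').ne (eq_of_length_eq_zero h).symm
    omega

theorem card_le_length_of_disjoint {ι : Type*} [Fintype ι] {u v : V} (p : G.Walk u v)
    (D : ι → Set G.Dart) (hD : ∀ i, ∃ d ∈ p.darts, d ∈ D i)
    (hdisj : ∀ d ∈ p.darts, ∀ i j, d ∈ D i → d ∈ D j → i = j) :
    Fintype.card ι ≤ p.length := by
  classical
  choose d hdp hdD using hD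
  calc Fintype.card ι = #(univ.image d) :=
        (card_image_of_injective _ fun i j (h : d i = d j) =>
          hdisj _ (hdp i) i j (hdD i) (h ▸ hdD j)).symm
    _ ≤ #p.darts.toFinset := card_le_card fun _ => by grind [List.mem_toFinset]
    _ ≤ p.length := p.length_darts ▸ p.darts.toFinset_card_le

theorem reachable_deleteEdges_getVert {u v : V} (p : G.Walk u v) {e : Sym2 V} {m n : ℕ}
    (hmn : m ≤ n) (hn : n ≤ p.length)
    (he : ∀ l, m ≤ l → l < n → s(p.getVert l, p.getVert (l + 1)) ≠ e) :
    (G.deleteEdges {e}).Reachable (p.getVert m) (p.getVert n) := by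
  induction n, hmn using Nat.le_induction with
  | base => rfl
  | succ n hmn ih =>
    refine (ih (by omega) fun l hl hln => he l hl (by omega)).trans (Adj.reachable ?_)
    exact (deleteEdges_adj ..).2 ⟨p.adj_getVert_succ (by omega), he n hmn (by omega)⟩

theorem dist_getVert_of_length_eq_dist {u v : V} {p : G.Walk u v} (hp : p.length = G.dist u v)
    {i : ℕ} (hi : i ≤ p.length) : G.dist u (p.getVert i) = i := by
  rw [← length_eq_dist_of_subwalk hp (p.isSubwalk_take i), take_length]
  omega

theorem IsPath.eq_of_edge_getVert_eq {u v : V} {p : G.Walk u v} (hp : p.IsPath) {i j : ℕ}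
    (hi : i < p.length) (hj : j < p.length)
    (h : s(p.getVert i, p.getVert (i + 1)) = s(p.getVert j, p.getVert (j + 1))) : i = j := by
  have hinj := hp.getVert_injOn
  obtain ⟨h1, -⟩ | ⟨h1, h2⟩ := Sym2.eq_iff.1 h
  · exact hinj (by simp; omega) (by simp; omega) h1
  · have := hinj (by simp; omega) (by simp; omega) h1
    have := hinj (by simp; omega) (by simp; omega) h2
    omega

end Walk

section EdgeSide

def edgeSide (G : SimpleGraph V) (x y : V) : Set V :=
  {z | (G.deleteEdges {s(x, y)}).Reachable x z}

theorem IsAcyclic.notMem_edgeSide (hG : G.IsAcyclic) {x y : V} (hxy : G.Adj x y) :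
    y ∉ G.edgeSide x y :=
  isAcyclic_iff_forall_adj_isBridge.1 hG hxy

theorem IsAcyclic.eq_of_adj_of_mem_edgeSide (hG : G.IsAcyclic) {x y a b : V} (hxy : G.Adj x y)
    (hab : G.Adj a b) (ha : a ∈ G.edgeSide x y) (hb : b ∉ G.edgeSide x y) : a = x ∧ b = y := by
  have hedge : s(a, b) = s(x, y) := by_contra fun h =>
    hb (Reachable.trans ha ((deleteEdges_adj ..).2 ⟨hab, h⟩).reachable)
  obtain h | ⟨rfl, rfl⟩ := Sym2.eq_iff.1 hedge
  · exact h
  · exact absurd ha (hG.notMem_edgeSide hxy)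

namespace Walk

variable {u w : V} {p : G.Walk u w}

theorem IsPath.getVert_mem_edgeSide_iff (hG : G.IsAcyclic) (hp : p.IsPath) {i m : ℕ}
    (hi : i < p.length) (hm : m ≤ p.length) :
    p.getVert m ∈ G.edgeSide (p.getVert i) (p.getVert (i + 1)) ↔ m ≤ i := by
  have hne (l : ℕ) (hl : l < p.length) (hli : l ≠ i) :
      s(p.getVert l, p.getVert (l + 1)) ≠ s(p.getVert i, p.getVert (i + 1)) :=
    fun h => hli (hp.eq_of_edge_getVert_eq hl hi h)
  constructor
  · intro hmem
    by_contra! him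
    have hfar := p.reachable_deleteEdges_getVert him hm fun l hl hlm => hne l (by omega) (by omega)
    exact hG.notMem_edgeSide (p.adj_getVert_succ hi) (Reachable.trans hmem hfar.symm)
  · intro hmi
    exact (p.reachable_deleteEdges_getVert hmi hi.le
      fun l _ hli => hne l (by omega) (by omega)).symm

theorem IsPath.start_mem_edgeSide (hG : G.IsAcyclic) (hp : p.IsPath) {i : ℕ}
    (hi : i < p.length) : u ∈ G.edgeSide (p.getVert i) (p.getVert (i + 1)) := by
  have := (hp.getVert_mem_edgeSide_iff hG hi (Nat.zero_le _)).2 (Nat.zero_le _)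
  rwa [getVert_zero] at this

theorem IsPath.end_notMem_edgeSide (hG : G.IsAcyclic) (hp : p.IsPath) {i : ℕ}
    (hi : i < p.length) : w ∉ G.edgeSide (p.getVert i) (p.getVert (i + 1)) := by
  have := mt (hp.getVert_mem_edgeSide_iff hG hi le_rfl).1 (by omega)
  rwa [getVert_length] at this

theorem IsPath.edgeSide_mono (hG : G.IsAcyclic) (hp : p.IsPath) {i j : ℕ} (hij : i ≤ j)
    (hj : j < p.length) :
    G.edgeSide (p.getVert i) (p.getVert (i + 1)) ⊆
      G.edgeSide (p.getVert j) (p.getVert (j + 1)) := by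
  classical
  intro z hz
  obtain ⟨W, hW⟩ := reachable_deleteEdges_iff_exists_walk.1 hz
  by_cases hWj : s(p.getVert j, p.getVert (j + 1)) ∈ W.edges
  · have hsupp := W.snd_mem_support_of_mem_edges hWj
    have hmem : p.getVert (j + 1) ∈ G.edgeSide (p.getVert i) (p.getVert (i + 1)) :=
      reachable_deleteEdges_iff_exists_walk.2
        ⟨W.takeUntil _ hsupp, fun h => hW (W.edges_takeUntil_subset_edges hsupp h)⟩
    have := (hp.getVert_mem_edgeSide_iff hG (by omega) hj).1 hmem
    omega
  · exact Reachable.trans ((hp.getVert_mem_edgeSide_iff hG hj (by omega)).2 hij)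
      (reachable_deleteEdges_iff_exists_walk.2 ⟨W, hWj⟩)

end Walk

end EdgeSide

section Tree

theorem IsTree.eq_penultimate_of_adj_of_dist_lt (hG : G.IsTree) {r v w : V} {p : G.Walk r v}
    (hp : p.length = G.dist r v) (hadj : G.Adj v w) (hw : G.dist r w < G.dist r v) :
    w = p.penultimate := by
  classical
  have hpath := p.isPath_of_length_eq_dist hp
  obtain ⟨q, hq, hqlen⟩ := hG.connected.exists_path_of_dist r w
  have hv : v ∉ q.support := fun hv => by
    have := dist_le (q.takeUntil v hv)
    have := q.length_takeUntil_le_length hv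
    omega
  exact hG.isAcyclic.eq_penultimate_of_adj_end hpath hadj
    (hG.isAcyclic.mem_support_of_ne_mem_support_of_adj_of_isPath hpath hq hadj hv)

theorem IsTree.exists_isLeaf_mem_edgeSide_diff [Finite V] (hG : G.IsTree)
    (hdeg : ∀ v, ¬ IsLeaf G v → 3 ≤ ncDeg G v) {u w : V} {Q : G.Walk u w}
    (hQ : Q.length = G.dist u w) {i j : ℕ} (hij : i < j) (hj : j < Q.length) :
    ∃ ℓ, IsLeaf G ℓ ∧ ℓ ∈ G.edgeSide (Q.getVert j) (Q.getVert (j + 1)) ∧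
      ℓ ∉ G.edgeSide (Q.getVert i) (Q.getVert (i + 1)) := by
  have hQp := Q.isPath_of_length_eq_dist hQ
  set S := fun n => G.edgeSide (Q.getVert n) (Q.getVert (n + 1))
  obtain ⟨v, ⟨hvj, hvi⟩, hmax⟩ := Set.exists_max_image (S j \ S i) (G.dist u) (Set.toFinite _)
    ⟨Q.getVert j, (hQp.getVert_mem_edgeSide_iff hG.isAcyclic hj hj.le).2 le_rfl,
      mt (hQp.getVert_mem_edgeSide_iff hG.isAcyclic (by omega) hj.le).1 (by omega)⟩
  refine ⟨v, by_contra fun hleaf => ?_, hvj, hvi⟩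
  obtain ⟨p, hp⟩ := hG.connected.exists_walk_length_eq_dist u v
  -- `v` has at most one neighbour closer to `u`, and maximality leaves only `Q.getVert (j + 1)`
  -- as a neighbour farther from `u`.
  have hnbr : G.neighborSet v ⊆ {p.penultimate, Q.getVert (j + 1)} := by
    intro w (hw : G.Adj v w)
    rcases hG.dist_eq_dist_add_one_of_adj u hw with hcloser | hfarther
    · exact .inl (hG.eq_penultimate_of_adj_of_dist_lt hp hw (by omega))
    · refine .inr ?_
      by_cases hwj : w ∈ S j
      · have hwi : w ∈ S i := by_contra fun h => by have := hmax w ⟨hwj, h⟩; omega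
        obtain ⟨rfl, rfl⟩ := hG.isAcyclic.eq_of_adj_of_mem_edgeSide
          (Q.adj_getVert_succ (by omega)) hw.symm hwi hvi
        have := Q.dist_getVert_of_length_eq_dist hQ (i := i) (by omega)
        have := Q.dist_getVert_of_length_eq_dist hQ (i := i + 1) (by omega)
        omega
      · exact (hG.isAcyclic.eq_of_adj_of_mem_edgeSide (Q.adj_getVert_succ hj) hw hvj hwj).2
  have := (Set.ncard_le_ncard hnbr).trans (Set.ncard_insert_le _ _)
  rw [Set.ncard_singleton] at this
  exact absurd (hdeg v hleaf) (by unfold ncDeg; omega)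

end Tree

end SimpleGraph

namespace HalinGraph

variable {V : Type*} [Fintype V] (H : HalinGraph V)

theorem isLeaf_of_adj {a b : V} (h : H.C.Adj a b) : IsLeaf H.T a := by
  have ha : a ∈ H.C.support := ⟨b, h⟩
  rwa [H.support_C] at ha

theorem edge_eq_of_mem_edgeSide_of_notMem_edgeSide {u1 u2 : V} (hadj : H.C.Adj u1 u2)
    {Q : H.T.Walk u1 u2} (hQ : Q.length = H.T.dist u1 u2) {i j : ℕ} (hij : i < j)
    (hj : j < Q.length) {a b : V} (hab : H.graph.Adj a b)
    (ha : a ∈ H.T.edgeSide (Q.getVert i) (Q.getVert (i + 1)))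
    (hb : b ∉ H.T.edgeSide (Q.getVert j) (Q.getVert (j + 1))) : s(a, b) = s(u1, u2) := by
  have hT := H.tree_isTree.isAcyclic
  have hQp := Q.isPath_of_length_eq_dist hQ
  set S := fun n => H.T.edgeSide (Q.getVert n) (Q.getVert (n + 1))
  have hsub : S i ⊆ S j := hQp.edgeSide_mono hT hij.le hj
  by_contra hne
  rcases (sup_adj ..).1 hab with hT' | hC
  · have hai := (hT.eq_of_adj_of_mem_edgeSide (Q.adj_getVert_succ (by omega)) hT' ha
      fun h => hb (hsub h)).1
    have haj := (hT.eq_of_adj_of_mem_edgeSide (Q.adj_getVert_succ hj) hT' (hsub ha) hb).1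
    have := hQp.getVert_injOn (by simp; omega) (by simp; omega) (hai.symm.trans haj)
    omega
  · set L := fun n => {z | IsLeaf H.T z ∧ z ∈ S n}
    obtain ⟨ℓ, hℓ, hℓj, hℓi⟩ :=
      H.tree_isTree.exists_isLeaf_mem_edgeSide_diff H.nonleaf_degree hQ hij hj
    have hsupp (z : V) (hz : IsLeaf H.T z) : z ∈ H.C.support := by rwa [H.support_C]
    have hreach : H.C.Reachable ℓ u1 :=
      (H.cycle_connected ⟨ℓ, hsupp ℓ hℓ⟩ ⟨u1, hsupp u1 (H.isLeaf_of_adj hadj)⟩).map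
        (Embedding.induce _).toHom
    refine hℓi (mem_of_reachable_of_common_boundary (X := L i) (Y := L j)
      (fun z hz => ⟨hz.1, hsub hz.2⟩) (H.planar _ _ (Q.adj_getVert_succ (by omega)))
      (H.planar _ _ (Q.adj_getVert_succ hj)) (fun z hz => H.two_regular z (hsupp z hz.1))
      ⟨H.isLeaf_of_adj hadj, hQp.start_mem_edgeSide hT (by omega)⟩
      (fun h => hQp.end_notMem_edgeSide hT hj h.2) hadj ⟨H.isLeaf_of_adj hC, ha⟩
      (fun h => hb h.2) hC ?_ ⟨hℓ, hℓj⟩ hreach).2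
    rintro ⟨rfl, rfl⟩
    exact hne rfl

theorem dist_le_length_of_notMem_edges {u1 u2 : V} (hadj : H.C.Adj u1 u2)
    (P : H.graph.Walk u1 u2) (hP : s(u1, u2) ∉ P.edges) : H.T.dist u1 u2 ≤ P.length := by
  obtain ⟨Q, hQ⟩ := H.tree_isTree.connected.exists_walk_length_eq_dist u1 u2
  have hQp := Q.isPath_of_length_eq_dist hQ
  have hT := H.tree_isTree.isAcyclic
  set S := fun n => H.T.edgeSide (Q.getVert n) (Q.getVert (n + 1))
  have hcross (i j : ℕ) (hij : i < j) (hj : j < Q.length) (d : H.graph.Dart)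
      (hd : d ∈ P.darts) (hdi : d.fst ∈ S i) (hdj : d.snd ∉ S j) : False :=
    hP (H.edge_eq_of_mem_edgeSide_of_notMem_edgeSide hadj hQ hij hj d.adj hdi hdj ▸
      List.mem_map_of_mem (f := Dart.edge) hd)
  have := P.card_le_length_of_disjoint (ι := Fin Q.length)
    (fun i => {d | d.fst ∈ S i ∧ d.snd ∉ S i})
    (fun i => P.exists_boundary_dart (S i) (hQp.start_mem_edgeSide hT i.2)
      (hQp.end_notMem_edgeSide hT i.2))
    fun d hd i j hi hj => by
      by_contra hne
      rcases Fin.lt_or_lt_of_ne hne with h | h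
      · exact hcross i j h j.2 d hd hi.1 hj.2
      · exact hcross j i h i.2 d hd hj.1 hi.2
  rwa [Fintype.card_fin, hQ] at this

end HalinGraph

theorem cycle_through_outer_edge_long_general {V : Type*} [Fintype V] (H : HalinGraph V)
    {u1 u2 : V} (hadj : H.C.Adj u1 u2)
    (x : V) (c : H.graph.Walk x x) (hc : c.IsCycle) (he : s(u1, u2) ∈ c.edges) :
    H.T.dist u1 u2 + 1 ≤ c.length := by
  obtain ⟨P, hP, hlen⟩ := hc.exists_walk_notMem_edges_length_lt he
  have := H.dist_le_length_of_notMem_edges hadj P hP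
  omega

/-- If `u₁` and `u₂` are leaves of the characteristic tree joined by an outer-cycle
edge, then every cycle of the Halin graph through `u₁u₂` has length at least
`d_T(u₁, u₂) + 1`, the size of the bounded face incident to `u₁u₂`. -/
theorem cycle_through_outer_edge_long {V : Type*} [Fintype V] (H : HalinGraph V)
    {u1 u2 : V} (h1 : IsLeaf H.T u1) (h2 : IsLeaf H.T u2) (hadj : H.C.Adj u1 u2)
    (x : V) (c : H.graph.Walk x x) (hc : c.IsCycle) (he : s(u1, u2) ∈ c.edges) :
    H.T.dist u1 u2 + 1 ≤ c.length :=
  cycle_through_outer_edge_long_general H hadj x c hc he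
end

section
/- For every integer n ≥ 16 there exists an n-vertex C4-free Halin graph H with e(H) = 5(n−1)/3 if n ≡ 1 (mod 3), with e(H) = 5(n−2)/3 + 1 if n ≡ 2 (mod 3), and with e(H) = 5(n−3)/3 + 3 if n ≡ 0 (mod 3). -/
open SimpleGraph

/-!
The extremal graph comes from a tree with root `0`, one or two hubs below the root, pendants
below the hubs and two leaves below each pendant, plus two or three leaves of the root. Listing
the leaves in depth-first order closes them into the outer cycle, and the leaves below every tree
vertex then form an arc of it, which is the planarity condition. The graph has `(n - 1) + L`
edges, where the number `L` of leaves is `2(n - 1)/3`, `2(n - 2)/3` or `2(n - 3)/3 + 1` according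
as `n ≡ 1`, `2` or `0 (mod 3)`.

It has no `4`-cycle: the tree is acyclic, so a `4`-cycle uses an edge `ab` of the outer cycle and
leaves `a` and `b` towards their parents or their other neighbours on the outer cycle. The four
possibilities are excluded because the outer cycle has at least five vertices, leaves two apart on
it have different parents, and no two parents of leaves are adjacent.
-/

open Finset

section General

variable {V : Type*} {G : SimpleGraph V}

theorem SimpleGraph.Reachable.iff_of_forall_adj {P : V → Prop}
    (hP : ∀ x y, G.Adj x y → (P x ↔ P y)) {u v : V} (h : G.Reachable u v) : P u ↔ P v := by
  obtain ⟨w⟩ := h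
  induction w with
  | nil => rfl
  | cons hadj _ ih => exact (hP _ _ hadj).trans ih

def SimpleGraph.IsFourCycle (G : SimpleGraph V) (a b c d : V) : Prop :=
  G.Adj a b ∧ G.Adj b c ∧ G.Adj c d ∧ G.Adj d a ∧ a ≠ c ∧ b ≠ d

namespace SimpleGraph.IsFourCycle

variable {a b c d : V}

theorem rotate (h : G.IsFourCycle a b c d) : G.IsFourCycle b c d a :=
  ⟨h.2.1, h.2.2.1, h.2.2.2.1, h.1, h.2.2.2.2.2, h.2.2.2.2.1.symm⟩

theorem reverse (h : G.IsFourCycle a b c d) : G.IsFourCycle b a d c :=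
  ⟨h.1.symm, h.2.2.2.1.symm, h.2.2.1.symm, h.2.1.symm, h.2.2.2.2.2, h.2.2.2.2.1⟩

end SimpleGraph.IsFourCycle

theorem SimpleGraph.IsAcyclic.not_isFourCycle (hG : G.IsAcyclic) {a b c d : V} :
    ¬ G.IsFourCycle a b c d := by
  rintro ⟨hab, hbc, hcd, hda, hac, hbd⟩
  refine hG (.cons hab (.cons hbc (.cons hcd (.cons hda .nil)))) ?_
  simp [Walk.cons_isCycle_iff, hab.ne, hbc.ne, hcd.ne, hda.ne, hac, hbd, hab.ne.symm,
    hda.ne.symm, hac.symm]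

theorem C4Free.of_forall_not_isFourCycle (h : ∀ a b c d, ¬ G.IsFourCycle a b c d) :
    C4Free G := by
  rintro v (_ | ⟨hab, _ | ⟨hbc, _ | ⟨hcd, _ | ⟨hda, _ | ⟨_, _⟩⟩⟩⟩⟩) hcyc hlen <;>
    simp only [Walk.length_cons, Walk.length_nil] at hlen <;> try omega
  have hnodup := hcyc.support_nodup
  simp only [Walk.support_cons, Walk.support_nil, List.tail_cons, List.nodup_cons,
    List.mem_cons, List.not_mem_nil, or_false, not_or] at hnodup
  exact h _ _ _ _ ⟨hab, hbc, hcd, hda, Ne.symm hnodup.2.1.2, hnodup.1.2.1⟩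

theorem three_le_ncDeg_of_adj [Finite V] {v x y z : V} (hx : G.Adj v x) (hy : G.Adj v y)
    (hz : G.Adj v z) (hxy : x ≠ y) (hxz : x ≠ z) (hyz : y ≠ z) : 3 ≤ ncDeg G v :=
  (Set.two_lt_ncard_iff).2 ⟨x, y, z, hx, hy, hz, hxy, hxz, hyz⟩

theorem ncDeg_eq_degree (G : SimpleGraph V) (v : V) [Fintype (G.neighborSet v)] :
    ncDeg G v = G.degree v :=
  Set.ncard_eq_toFinset_card' _

theorem eCount_eq_card_edgeFinset (G : SimpleGraph V) [Fintype G.edgeSet] :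
    eCount G = #G.edgeFinset :=
  Set.ncard_eq_toFinset_card' _

end General

theorem Fin.card_filter_le_val (n m : ℕ) : #{v : Fin n | m ≤ (v : ℕ)} = n - m := by
  have hlt := Fin.card_filter_val_lt (n := n) (m := m)
  have hsplit := card_filter_add_card_filter_not (s := (univ : Finset (Fin n)))
    (fun v : Fin n => (v : ℕ) < m)
  simp only [not_lt, card_univ, Fintype.card_fin] at hsplit
  omega

section ParentGraph

variable {V : Type*}

def parentGraph (p : V → V) : SimpleGraph V where
  Adj u v := u ≠ v ∧ (p u = v ∨ p v = u)
  symm := ⟨fun _ _ h => ⟨h.1.symm, h.2.symm⟩⟩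
  loopless := ⟨fun _ h => h.1 rfl⟩

def IsDescendant (p : V → V) (v x : V) : Prop := ∃ i, p^[i] x = v

variable {p : V → V} {r u v x y : V}

theorem parentGraph_adj : (parentGraph p).Adj u v ↔ u ≠ v ∧ (p u = v ∨ p v = u) := Iff.rfl

theorem IsDescendant.refl (p : V → V) (v : V) : IsDescendant p v v := ⟨0, rfl⟩

theorem isDescendant_apply_iff (hxv : x ≠ v) : IsDescendant p v (p x) ↔ IsDescendant p v x := by
  refine ⟨fun ⟨i, hi⟩ => ⟨i + 1, hi⟩, fun ⟨i, hi⟩ => ?_⟩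
  cases i with
  | zero => exact absurd hi hxv
  | succ i => exact ⟨i, hi⟩

theorem isDescendant_iff_of_deleteEdges_adj
    (hxy : ((parentGraph p).deleteEdges {s(v, p v)}).Adj x y) :
    IsDescendant p v x ↔ IsDescendant p v y := by
  obtain ⟨⟨-, rfl | rfl⟩, hE⟩ := (deleteEdges_adj ..).1 hxy
  · refine (isDescendant_apply_iff fun hxv => hE ?_).symm
    simp [hxv]
  · refine isDescendant_apply_iff fun hyv => hE ?_
    simp [hyv, Sym2.eq_swap]

variable [LinearOrder V]

structure IsParentMap (p : V → V) (r : V) : Prop where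
  lt_of_ne : ∀ v, v ≠ r → p v < v
  apply_root : p r = r

namespace IsParentMap

variable (h : IsParentMap p r)
include h

theorem le (v : V) : p v ≤ v := by
  rcases eq_or_ne v r with rfl | hv
  · exact h.apply_root.le
  · exact (h.lt_of_ne v hv).le

theorem iterate_root (i : ℕ) : p^[i] r = r :=
  Function.iterate_fixed h.apply_root i

theorem le_of_isDescendant (hd : IsDescendant p v x) : v ≤ x := by
  obtain ⟨i, rfl⟩ := hd
  induction i generalizing x with
  | zero => exact le_rfl
  | succ i ih => exact (ih (x := p x)).trans (h.le x)

theorem not_isDescendant_apply (hv : v ≠ r) : ¬ IsDescendant p v (p v) :=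
  fun hd => (h.le_of_isDescendant hd).not_gt (h.lt_of_ne v hv)

theorem isDescendant_iff_of_iterate_eq_root {k : ℕ} (hk : p^[k] x = r) (hv : v ≠ r) :
    IsDescendant p v x ↔ ∃ i < k, p^[i] x = v := by
  refine ⟨fun ⟨i, hi⟩ => ⟨i, ?_, hi⟩, fun ⟨i, _, hi⟩ => ⟨i, hi⟩⟩
  by_contra! hik
  rw [← Nat.sub_add_cancel hik, Function.iterate_add_apply, hk, h.iterate_root] at hi
  exact hv hi.symm

theorem adj_apply (hv : v ≠ r) : (parentGraph p).Adj v (p v) :=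
  ⟨(h.lt_of_ne v hv).ne', Or.inl rfl⟩

variable [WellFoundedLT V]

theorem reachable_deleteEdges_of_climb {S : Set V} {E : Set (Sym2 V)} {c : V}
    (hS : ∀ x ∈ S, x ≠ c → x ≠ r ∧ p x ∈ S ∧ s(x, p x) ∉ E) :
    ∀ x ∈ S, ((parentGraph p).deleteEdges E).Reachable x c := by
  intro x
  induction x using WellFoundedLT.induction with
  | _ x ih =>
    intro hx
    rcases eq_or_ne x c with rfl | hxc
    · rfl
    obtain ⟨hxr, hpx, hE⟩ := hS x hx hxc
    exact (Adj.reachable ((deleteEdges_adj ..).2 ⟨h.adj_apply hxr, hE⟩)).trans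
      (ih _ (h.lt_of_ne x hxr) hpx)

theorem reachable_deleteEdges_iff (hv : v ≠ r) :
    ((parentGraph p).deleteEdges {s(v, p v)}).Reachable v x ↔ IsDescendant p v x := by
  refine ⟨fun hr => (hr.iff_of_forall_adj fun _ _ => isDescendant_iff_of_deleteEdges_adj).1
    (.refl p v), fun hd => (h.reachable_deleteEdges_of_climb (S := {x | IsDescendant p v x})
    ?_ x hd).symm⟩
  intro x hx hxv
  have hxr : x ≠ r := by
    rintro rfl
    obtain ⟨i, hi⟩ := hx
    rw [h.iterate_root] at hi
    exact hv hi.symm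
  refine ⟨hxr, (isDescendant_apply_iff hxv).2 hx, ?_⟩
  simp only [Set.mem_singleton_iff, Sym2.eq_iff, hxv, false_and, false_or]
  rintro ⟨rfl, hpx⟩
  have := h.le (p v)
  rw [hpx] at this
  exact (h.lt_of_ne _ hv).not_ge this

theorem reachable_apply_deleteEdges_iff (hv : v ≠ r) :
    ((parentGraph p).deleteEdges {s(v, p v)}).Reachable (p v) x ↔ ¬ IsDescendant p v x := by
  refine ⟨fun hr hd => h.not_isDescendant_apply hv
    ((hr.iff_of_forall_adj fun _ _ => isDescendant_iff_of_deleteEdges_adj).2 hd), fun hd => ?_⟩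
  have climb := h.reachable_deleteEdges_of_climb (S := {x | ¬ IsDescendant p v x})
    (E := {s(v, p v)}) (c := r) ?_
  · exact (climb _ (h.not_isDescendant_apply hv)).trans (climb x hd).symm
  intro x hx hxr
  have hxv : x ≠ v := fun hxv => hx (hxv ▸ .refl p x)
  refine ⟨hxr, fun hpx => hx ((isDescendant_apply_iff hxv).1 hpx), ?_⟩
  simp only [Set.mem_singleton_iff, Sym2.eq_iff, hxv, false_and, false_or]
  rintro ⟨-, hpx⟩
  exact hx ⟨1, hpx⟩

theorem isTree : (parentGraph p).IsTree := by
  have hconn : (parentGraph p).Connected := by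
    refine (connected_iff_exists_forall_reachable _).2 ⟨r, fun x => ?_⟩
    have := h.reachable_deleteEdges_of_climb (S := Set.univ) (E := ∅) (c := r)
      (fun x _ hxr => ⟨hxr, trivial, id⟩) x trivial
    rw [deleteEdges_empty] at this
    exact this.symm
  refine ⟨hconn, isAcyclic_iff_forall_adj_isBridge.2 fun u w huw => ?_⟩
  wlog hpu : p u = w generalizing u w
  · rw [Sym2.eq_swap]
    exact this w u huw.symm (huw.2.resolve_left hpu)
  have hur : u ≠ r := fun hur => huw.1 (by rw [← hpu, hur, h.apply_root])
  subst hpu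
  exact isBridge_iff.2 fun hr =>
    h.not_isDescendant_apply hur ((h.reachable_deleteEdges_iff hur).1 hr)

end IsParentMap

end ParentGraph

section LeafCycle

def IsCycleSucc (n m a b : ℕ) : Prop := b = a + 1 ∨ (a + 1 = n ∧ b = m)

def leafCycle (n m : ℕ) : SimpleGraph (Fin n) where
  Adj u v := u ≠ v ∧ m ≤ u ∧ m ≤ v ∧ (IsCycleSucc n m u v ∨ IsCycleSucc n m v u)
  symm := ⟨fun _ _ h => ⟨h.1.symm, h.2.2.1, h.2.1, h.2.2.2.symm⟩⟩
  loopless := ⟨fun _ h => h.1 rfl⟩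

variable {n m : ℕ}

theorem leafCycle_adj {u v : Fin n} : (leafCycle n m).Adj u v ↔
    u ≠ v ∧ m ≤ u ∧ m ≤ v ∧ (IsCycleSucc n m u v ∨ IsCycleSucc n m v u) := Iff.rfl

theorem leafCycle_adj_of_isCycleSucc {u v : Fin n} (hm : m + 2 ≤ n) (hu : m ≤ u)
    (huv : IsCycleSucc n m u v) : (leafCycle n m).Adj u v := by
  unfold IsCycleSucc at huv
  refine ⟨fun h => ?_, hu, by omega, Or.inl huv⟩
  subst h
  omega

theorem ncDeg_leafCycle (hm : m + 3 ≤ n) {v : Fin n} (hv : m ≤ v) :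
    ncDeg (leafCycle n m) v = 2 := by
  refine Set.ncard_eq_two.2 ⟨⟨if v + 1 < n then v + 1 else m, by split_ifs <;> omega⟩,
    ⟨if m < v then v - 1 else n - 1, by split_ifs <;> omega⟩, ?_, ?_⟩
  · simp only [ne_eq, Fin.mk.injEq]
    split_ifs <;> omega
  · ext u
    have := u.isLt
    simp only [mem_neighborSet, leafCycle_adj, IsCycleSucc, Set.mem_insert_iff,
      Set.mem_singleton_iff, Fin.ext_iff, ne_eq]
    split_ifs <;> omega

theorem ncDeg_leafCycle_of_lt {v : Fin n} (hv : v < m) : ncDeg (leafCycle n m) v = 0 := by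
  rw [ncDeg, Set.ncard_eq_zero]
  ext u
  simp only [mem_neighborSet, leafCycle_adj, Set.mem_empty_iff_false, iff_false]
  omega

theorem support_leafCycle (hm : m + 2 ≤ n) :
    (leafCycle n m).support = {v : Fin n | m ≤ v} := by
  ext v
  refine ⟨fun ⟨_, h⟩ => h.2.1, fun hv => ?_⟩
  exact ⟨⟨if v + 1 < n then v + 1 else m, by split_ifs <;> omega⟩,
    leafCycle_adj_of_isCycleSucc hm hv (by simp only [IsCycleSucc]; split_ifs <;> omega)⟩

theorem eCount_leafCycle (hm : m + 3 ≤ n) : eCount (leafCycle n m) = n - m := by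
  classical
  have hsum := sum_degrees_eq_twice_card_edges (leafCycle n m)
  have hdeg : ∀ v, (leafCycle n m).degree v = if m ≤ (v : ℕ) then 2 else 0 := fun v => by
    rw [← ncDeg_eq_degree]
    split_ifs with hv
    · exact ncDeg_leafCycle hm hv
    · exact ncDeg_leafCycle_of_lt (by omega)
  simp only [hdeg, sum_ite, sum_const_zero, sum_const, smul_eq_mul, add_zero,
    Fin.card_filter_le_val] at hsum
  rw [eCount_eq_card_edgeFinset]
  omega

theorem leafCycle_induce_Ico_connected {lo hi : ℕ} (hm : m ≤ lo) (hlo : lo < hi)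
    (hhi : hi ≤ n) : ((leafCycle n m).induce {x : Fin n | lo ≤ x ∧ x < hi}).Connected := by
  induction hi, hlo using Nat.le_induction with
  | base =>
    rw [show {x : Fin n | lo ≤ x ∧ x < lo + 1} = {⟨lo, by omega⟩} from Set.ext fun x => by
      simp only [Set.mem_ofPred_eq, Set.mem_singleton_iff, Fin.ext_iff]; omega,
      induce_singleton_eq_top]
    exact connected_top
  | succ hi hlo ih =>
    rw [show {x : Fin n | lo ≤ x ∧ x < hi + 1} =
        {x : Fin n | lo ≤ x ∧ x < hi} ∪ {⟨hi, by omega⟩} from Set.ext fun x => by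
      simp only [Set.mem_ofPred_eq, Set.mem_union, Set.mem_singleton_iff, Fin.ext_iff]; omega]
    have hadj : (leafCycle n m).Adj ⟨hi - 1, by omega⟩ ⟨hi, by omega⟩ :=
      leafCycle_adj_of_isCycleSucc (by omega) (by simp only; omega) (Or.inl (by simp only; omega))
    refine connected_induce_union (ih (by omega)).preconnected ?_
      ⟨by simp only; omega, by simp only; omega⟩ rfl hadj
    rw [induce_singleton_eq_top]
    exact connected_top.preconnected

theorem leafCycle_induce_compl_Ico_connected {lo hi : ℕ} (hm : m ≤ lo) (hlo : lo ≤ hi)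
    (hhi : hi ≤ n) (hproper : m < lo ∨ hi < n) :
    ((leafCycle n m).induce {x : Fin n | m ≤ x ∧ (x < lo ∨ hi ≤ x)}).Connected := by
  rcases eq_or_lt_of_le hm with rfl | hm'
  · rw [show {x : Fin n | m ≤ x ∧ (x < m ∨ hi ≤ x)} = {x : Fin n | hi ≤ x ∧ x < n} from
      Set.ext fun x => by simp only [Set.mem_ofPred_eq]; omega]
    exact leafCycle_induce_Ico_connected (by omega) (by omega) le_rfl
  rcases eq_or_lt_of_le hhi with rfl | hhi'
  · rw [show {x : Fin hi | m ≤ x ∧ (x < lo ∨ hi ≤ x)} = {x : Fin hi | m ≤ x ∧ x < lo} from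
      Set.ext fun x => by simp only [Set.mem_ofPred_eq]; omega]
    exact leafCycle_induce_Ico_connected le_rfl hm' hlo
  rw [show {x : Fin n | m ≤ x ∧ (x < lo ∨ hi ≤ x)} =
      {x : Fin n | hi ≤ x ∧ x < n} ∪ {x : Fin n | m ≤ x ∧ x < lo} from
    Set.ext fun x => by simp only [Set.mem_ofPred_eq, Set.mem_union]; omega]
  have hadj : (leafCycle n m).Adj ⟨n - 1, by omega⟩ ⟨m, by omega⟩ :=
    leafCycle_adj_of_isCycleSucc (by omega) (by simp only; omega)
      (Or.inr ⟨by simp only; omega, rfl⟩)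
  exact connected_induce_union
    (leafCycle_induce_Ico_connected (by omega) (by omega) le_rfl).preconnected
    (leafCycle_induce_Ico_connected le_rfl hm' (by omega)).preconnected
    ⟨by simp only; omega, by simp only; omega⟩ ⟨le_rfl, hm'⟩ hadj

end LeafCycle

section HalinOfParentMap

variable {n m : ℕ} {p : Fin n → Fin n} {r : Fin n}

def HasLeafInterval (p : Fin n → Fin n) (m : ℕ) (v : Fin n) : Prop :=
  ∃ lo hi, m ≤ lo ∧ lo < hi ∧ hi ≤ n ∧ (m < lo ∨ hi < n) ∧
    ∀ x : Fin n, m ≤ x → (IsDescendant p v x ↔ lo ≤ x ∧ x < hi)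

theorem disjoint_edgeSet_parentGraph_leafCycle (hpm : ∀ v, (p v : ℕ) < m) :
    Disjoint (parentGraph p).edgeSet (leafCycle n m).edgeSet := by
  refine Set.disjoint_left.2 fun e heT heC => ?_
  induction e using Sym2.ind with
  | _ u v =>
    rw [mem_edgeSet] at heT heC
    obtain ⟨_, hu, hv, _⟩ := heC
    have := hpm u
    have := hpm v
    rcases heT.2 with rfl | rfl <;> omega

namespace IsParentMap

variable (h : IsParentMap p r) (hpm : ∀ v, (p v : ℕ) < m)
include h hpm

theorem root_lt : (r : ℕ) < m :=
  h.apply_root ▸ hpm r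

theorem neighborSet_of_le {v : Fin n} (hv : m ≤ v) : (parentGraph p).neighborSet v = {p v} := by
  have hvr : v ≠ r := fun hvr => by have := h.root_lt hpm; omega
  ext u
  simp only [mem_neighborSet, Set.mem_singleton_iff]
  refine ⟨fun hu => hu.2.elim Eq.symm fun hu => ?_, fun hu => hu ▸ h.adj_apply hvr⟩
  have := hpm u
  omega

theorem isLeaf_iff (hdeg : ∀ v : Fin n, v < m → 3 ≤ ncDeg (parentGraph p) v) {v : Fin n} :
    IsLeaf (parentGraph p) v ↔ m ≤ v := by
  refine ⟨fun hv => ?_, fun hv => by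
    rw [IsLeaf, ncDeg, h.neighborSet_of_le hpm hv, Set.ncard_singleton]⟩
  by_contra! hvm
  have := hdeg v hvm
  rw [IsLeaf] at hv
  omega

theorem eCount_sup_leafCycle (hn : m + 3 ≤ n) :
    eCount (parentGraph p ⊔ leafCycle n m) = n - 1 + (n - m) := by
  classical
  have htree := h.isTree.card_edgeFinset
  rw [Fintype.card_fin] at htree
  rw [eCount, edgeSet_sup, Set.ncard_union_eq (disjoint_edgeSet_parentGraph_leafCycle hpm),
    ← eCount, ← eCount, eCount_leafCycle hn, eCount_eq_card_edgeFinset]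
  omega

theorem leafCycle_induce_connected (hdeg : ∀ v : Fin n, v < m → 3 ≤ ncDeg (parentGraph p) v)
    (hint : ∀ v, v ≠ r → HasLeafInterval p m v) {u v : Fin n} (huv : (parentGraph p).Adj u v) :
    ((leafCycle n m).induce {x | IsLeaf (parentGraph p) x ∧
      ((parentGraph p).deleteEdges {s(u, v)}).Reachable u x}).Connected := by
  rcases huv with ⟨huv, rfl | rfl⟩
  · have hu : u ≠ r := fun hu => huv (hu ▸ h.apply_root.symm)
    obtain ⟨lo, hi, hm, hlo, hhi, -, hdesc⟩ := hint u hu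
    suffices hset : {x | IsLeaf (parentGraph p) x ∧
        ((parentGraph p).deleteEdges {s(u, p u)}).Reachable u x} = {x : Fin n | lo ≤ x ∧ x < hi} by
      rw [hset]
      exact leafCycle_induce_Ico_connected hm hlo hhi
    ext x
    simp only [Set.mem_ofPred_eq, h.isLeaf_iff hpm hdeg, h.reachable_deleteEdges_iff hu]
    exact ⟨fun hx => (hdesc x hx.1).1 hx.2, fun hx => ⟨by omega, (hdesc x (by omega)).2 hx⟩⟩
  · have hv : v ≠ r := fun hv => huv (hv ▸ h.apply_root)
    obtain ⟨lo, hi, hm, hlo, hhi, hproper, hdesc⟩ := hint v hv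
    rw [Sym2.eq_swap]
    suffices hset : {x | IsLeaf (parentGraph p) x ∧
        ((parentGraph p).deleteEdges {s(v, p v)}).Reachable (p v) x} =
        {x : Fin n | m ≤ x ∧ (x < lo ∨ hi ≤ x)} by
      rw [hset]
      exact leafCycle_induce_compl_Ico_connected hm hlo.le hhi hproper
    ext x
    simp only [Set.mem_ofPred_eq, h.isLeaf_iff hpm hdeg, h.reachable_apply_deleteEdges_iff hv]
    exact and_congr_right fun hx => (not_congr (hdesc x hx)).trans (by omega)

def halin (hn : m + 3 ≤ n) (hdeg : ∀ v : Fin n, v < m → 3 ≤ ncDeg (parentGraph p) v)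
    (hint : ∀ v, v ≠ r → HasLeafInterval p m v) : HalinGraph (Fin n) where
  T := parentGraph p
  C := leafCycle n m
  tree_isTree := h.isTree
  four_le_card := by
    have := h.root_lt hpm
    rw [Fintype.card_fin]
    omega
  nonleaf_degree v hv := hdeg v (not_le.1 (mt (h.isLeaf_iff hpm hdeg).2 hv))
  support_C := by
    rw [support_leafCycle (by omega)]
    exact Set.ext fun v => (h.isLeaf_iff hpm hdeg).symm
  two_regular v hv := by
    rw [support_leafCycle (by omega)] at hv
    exact ncDeg_leafCycle hn hv
  cycle_connected := by
    rw [support_leafCycle (by omega), show {v : Fin n | m ≤ v} = {v : Fin n | m ≤ v ∧ v < n} from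
      Set.ext fun v => by simp only [Set.mem_ofPred_eq, v.isLt, and_true]]
    exact leafCycle_induce_Ico_connected le_rfl (by omega) le_rfl
  planar _ _ := h.leafCycle_induce_connected hpm hdeg hint

end IsParentMap

theorem parentGraph_sup_leafCycle_adj_iff (hpm : ∀ v, (p v : ℕ) < m) {x y : Fin n}
    (hx : m ≤ x) :
    (parentGraph p ⊔ leafCycle n m).Adj x y ↔ y = p x ∨ (leafCycle n m).Adj x y := by
  have hxp : x ≠ p x := fun hxp => by have := hpm x; rw [← hxp] at this; omega
  refine ⟨fun hxy => hxy.imp (fun ⟨_, hxy⟩ => hxy.elim Eq.symm fun hyx => ?_) id,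
    fun hxy => hxy.imp (fun (hy : y = p x) => ⟨hy ▸ hxp, Or.inl hy.symm⟩) id⟩
  have := hpm y
  rw [hyx] at this
  omega

theorem not_isFourCycle_parentGraph_sup_leafCycle (hpm : ∀ v, (p v : ℕ) < m) (hn : m + 5 ≤ n)
    (hsep : ∀ x y z : Fin n, m ≤ x → IsCycleSucc n m x y → IsCycleSucc n m y z → p x ≠ p z)
    (hindep : ∀ x y : Fin n, m ≤ x → m ≤ y → p (p x) = p y → p x = p y)
    {a b c d : Fin n} (ha : m ≤ a) (hab : IsCycleSucc n m a b) :
    ¬ (parentGraph p ⊔ leafCycle n m).IsFourCycle a b c d := by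
  rintro ⟨-, hbc, hcd, hda, hac, hbd⟩
  have hb : m ≤ b := by unfold IsCycleSucc at hab; omega
  have hc : c = p b ∨ m ≤ c ∧ IsCycleSucc n m b c := by
    rcases (parentGraph_sup_leafCycle_adj_iff hpm hb).1 hbc with hc | ⟨-, -, hc', hc | hc⟩
    · exact Or.inl hc
    · exact Or.inr ⟨hc', hc⟩
    · exact (hac (Fin.ext (by unfold IsCycleSucc at hab hc; omega))).elim
  have hd : d = p a ∨ m ≤ d ∧ IsCycleSucc n m d a := by
    rcases (parentGraph_sup_leafCycle_adj_iff hpm ha).1 hda.symm with hd | ⟨-, -, hd', hd | hd⟩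
    · exact Or.inl hd
    · exact (hbd (Fin.ext (by unfold IsCycleSucc at hab hd; omega))).elim
    · exact Or.inr ⟨hd', hd⟩
  rcases hc with rfl | ⟨hc', hc⟩ <;> rcases hd with rfl | ⟨hd', hd⟩
  · rcases hcd with ⟨hne, hcd | hcd⟩ | ⟨-, hcd, -⟩
    · exact hne (hindep b a hb ha hcd)
    · exact hne (hindep a b ha hb hcd).symm
    · exact absurd hcd (not_le.2 (hpm b))
  · rcases (parentGraph_sup_leafCycle_adj_iff hpm hd').1 hcd.symm with hcd | ⟨-, -, hcd, -⟩
    · exact hsep d a b hd' hd hab hcd.symm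
    · exact absurd hcd (not_le.2 (hpm b))
  · rcases (parentGraph_sup_leafCycle_adj_iff hpm hc').1 hcd with hcd | ⟨-, -, hcd, -⟩
    · exact hsep a b c ha hab hc hcd
    · exact absurd hcd (not_le.2 (hpm a))
  · rcases (parentGraph_sup_leafCycle_adj_iff hpm hc').1 hcd with rfl | ⟨-, -, -, hcd | hcd⟩
    · exact absurd hd' (not_le.2 (hpm c))
    · unfold IsCycleSucc at hab hc hd hcd
      omega
    · exact hac (Fin.ext (by unfold IsCycleSucc at hd hcd; omega)).symm

theorem IsParentMap.c4Free_sup_leafCycle (h : IsParentMap p r) (hpm : ∀ v, (p v : ℕ) < m)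
    (hn : m + 5 ≤ n)
    (hsep : ∀ x y z : Fin n, m ≤ x → IsCycleSucc n m x y → IsCycleSucc n m y z → p x ≠ p z)
    (hindep : ∀ x y : Fin n, m ≤ x → m ≤ y → p (p x) = p y → p x = p y) :
    C4Free (parentGraph p ⊔ leafCycle n m) := by
  have hcycle : ∀ {a b c d}, (parentGraph p ⊔ leafCycle n m).IsFourCycle a b c d →
      ¬ (leafCycle n m).Adj a b := by
    rintro a b c d hsq ⟨-, ha, hb, hab | hba⟩
    · exact not_isFourCycle_parentGraph_sup_leafCycle hpm hn hsep hindep ha hab hsq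
    · exact not_isFourCycle_parentGraph_sup_leafCycle hpm hn hsep hindep hb hba hsq.reverse
  refine C4Free.of_forall_not_isFourCycle fun a b c d hsq => ?_
  rcases hsq.1 with hab | hab
  · rcases hsq.2.1 with hbc | hbc
    · rcases hsq.2.2.1 with hcd | hcd
      · rcases hsq.2.2.2.1 with hda | hda
        · exact h.isTree.isAcyclic.not_isFourCycle ⟨hab, hbc, hcd, hda, hsq.2.2.2.2⟩
        · exact hcycle hsq.rotate.rotate.rotate hda
      · exact hcycle hsq.rotate.rotate hcd
    · exact hcycle hsq.rotate hbc
  · exact hcycle hsq hab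

end HalinOfParentMap

structure HalinC4Params where
  n : ℕ
  t : ℕ
  j : ℕ
  a : ℕ
  b : ℕ
  two_le_a : 2 ≤ a
  shape : (t = 1 ∧ j = 2 ∧ b = 0) ∨ (t = 2 ∧ j = 2 ∧ b = 2) ∨ (t = 2 ∧ j = 3 ∧ b = 2)
  n_eq : n = 1 + t + (a + b) + (j + 2 * (a + b))

namespace HalinC4Params

variable (P : HalinC4Params)

def m : ℕ := 1 + P.t + (P.a + P.b)

/-- Parents in the tree: `0` is the root, `1, …, t` are the hubs, `t + 1, …, t + a` the pendants
of hub `1` and the following `b` ones those of hub `2`. The leaves `m, …, n - 1`, in their order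
on the outer cycle, are two leaves of the root, two leaves of each pendant of hub `1`, `j - 2`
further leaves of the root and two leaves of each pendant of hub `2`. -/
def par (v : ℕ) : ℕ :=
  if v ≤ P.t then 0
  else if v < P.m then (if v ≤ P.t + P.a then 1 else 2)
  else if v < P.m + 2 then 0
  else if v < P.m + 2 + 2 * P.a then P.t + 1 + (v - P.m - 2) / 2
  else if v < P.m + 2 * P.a + P.j then 0
  else P.t + P.a + 1 + (v - P.m - 2 * P.a - P.j) / 2

/-- `par` as a disjunction of linear cases, the form in which `omega` uses it. -/
theorem par_spec (v : ℕ) :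
    (v ≤ P.t ∧ P.par v = 0) ∨
    (P.t < v ∧ v ≤ P.t + P.a ∧ P.par v = 1) ∨
    (P.t + P.a < v ∧ v < P.m ∧ P.par v = 2) ∨
    (P.m ≤ v ∧ v < P.m + 2 ∧ P.par v = 0) ∨
    (P.m + 2 ≤ v ∧ v < P.m + 2 + 2 * P.a ∧ P.par v = P.t + 1 + (v - P.m - 2) / 2) ∨
    (P.m + 2 + 2 * P.a ≤ v ∧ v < P.m + 2 * P.a + P.j ∧ P.par v = 0) ∨
    (P.m + 2 * P.a + P.j ≤ v ∧ P.par v = P.t + P.a + 1 + (v - P.m - 2 * P.a - P.j) / 2) := by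
  unfold par
  split_ifs <;> omega

theorem constraints : 2 ≤ P.a ∧ P.m = 1 + P.t + (P.a + P.b) ∧
    P.n = P.m + P.j + 2 * (P.a + P.b) ∧
    ((P.t = 1 ∧ P.j = 2 ∧ P.b = 0) ∨ (P.t = 2 ∧ P.j = 2 ∧ P.b = 2) ∨
      (P.t = 2 ∧ P.j = 3 ∧ P.b = 2)) :=
  ⟨P.two_le_a, rfl, P.n_eq.trans (by unfold m; omega), P.shape⟩

theorem m_add_five_le : P.m + 5 ≤ P.n := by
  have := P.constraints
  omega

theorem par_lt_m {v : ℕ} (hv : v < P.n) : P.par v < P.m := by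
  have := P.par_spec v
  have := P.constraints
  omega

theorem par_lt {v : ℕ} (h0 : 0 < v) (hv : v < P.n) : P.par v < v := by
  have := P.par_spec v
  have := P.constraints
  omega

def root : Fin P.n := ⟨0, by have := P.m_add_five_le; omega⟩

def parent (v : Fin P.n) : Fin P.n :=
  ⟨P.par v, (P.par_lt_m v.isLt).trans (by have := P.m_add_five_le; omega)⟩

theorem parent_lt_m (v : Fin P.n) : (P.parent v : ℕ) < P.m := P.par_lt_m v.isLt

theorem isParentMap : IsParentMap P.parent P.root where
  lt_of_ne v hv := P.par_lt (Nat.pos_of_ne_zero fun h => hv (Fin.ext h)) v.isLt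
  apply_root := Fin.ext (by simp [root, parent, par])

theorem parentGraph_adj_iff {u v : Fin P.n} : (parentGraph P.parent).Adj u v ↔
    (u : ℕ) ≠ v ∧ (P.par u = v ∨ P.par v = u) := by
  simp only [parentGraph_adj, ne_eq, Fin.ext_iff, parent]

def firstChild (v : ℕ) : ℕ :=
  if v = 0 then P.m
  else if v = 1 then P.t + 1
  else if v ≤ P.t then P.t + P.a + 1
  else if v ≤ P.t + P.a then P.m + 2 + 2 * (v - P.t - 1)
  else P.m + 2 * P.a + P.j + 2 * (v - P.t - P.a - 1)

theorem firstChild_spec {v : ℕ} (hv : v < P.m) :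
    v < P.firstChild v ∧ P.t < P.firstChild v ∧ P.firstChild v + 1 < P.n ∧
      P.par (P.firstChild v) = v ∧ P.par (P.firstChild v + 1) = v := by
  have := P.constraints
  have h1 := P.par_spec (P.firstChild v)
  have h2 := P.par_spec (P.firstChild v + 1)
  unfold firstChild at *
  split_ifs at * <;> omega

theorem three_le_ncDeg (v : Fin P.n) (hv : v < P.m) : 3 ≤ ncDeg (parentGraph P.parent) v := by
  obtain ⟨hlt, ht, hn, hc, hc'⟩ := P.firstChild_spec hv
  have := P.constraints
  have hpar := P.par_spec v
  have hpar1 := P.par_spec 1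
  refine three_le_ncDeg_of_adj (x := ⟨if (v : ℕ) = 0 then 1 else P.par v, by split_ifs <;> omega⟩)
    (y := ⟨P.firstChild v, by omega⟩) (z := ⟨P.firstChild v + 1, by omega⟩) ?_ ?_ ?_ ?_ ?_ ?_ <;>
    simp only [P.parentGraph_adj_iff, ne_eq, Fin.ext_iff] <;> (try split_ifs) <;> omega

theorem iterate_parent_three {x : Fin P.n} (hx : P.m ≤ x) : P.parent^[3] x = P.root := by
  have := P.constraints
  have h1 := P.par_spec x
  have h2 := P.par_spec (P.par x)
  have h3 := P.par_spec (P.par (P.par x))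
  exact Fin.ext (show P.par (P.par (P.par x)) = 0 by omega)

theorem isDescendant_iff {v x : Fin P.n} (hv : v ≠ P.root) (hx : P.m ≤ x) :
    IsDescendant P.parent v x ↔ (x : ℕ) = v ∨ P.par x = v ∨ P.par (P.par x) = v := by
  rw [P.isParentMap.isDescendant_iff_of_iterate_eq_root (P.iterate_parent_three hx) hv]
  simp only [Nat.exists_lt_succ_left, Nat.not_lt_zero, false_and, exists_false, or_false,
    Function.iterate_zero_apply, Function.iterate_succ_apply, Fin.ext_iff]
  rfl

theorem hasLeafInterval (v : Fin P.n) (hv : v ≠ P.root) : HasLeafInterval P.parent P.m v := by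
  have hv0 : (v : ℕ) ≠ 0 := fun h => hv (Fin.ext h)
  have := P.constraints
  have hvn := v.isLt
  obtain hleaf | hhub1 | hhub2 | hpend : P.m ≤ v ∨ (v : ℕ) = 1 ∨ (1 < (v : ℕ) ∧ (v : ℕ) ≤ P.t) ∨
      (P.t < v ∧ v < P.m) := by omega
  on_goal 1 => refine ⟨v, v + 1, hleaf, by omega, by omega, by omega, fun x hx => ?_⟩
  on_goal 2 => refine ⟨P.m + 2, P.m + 2 + 2 * P.a, by omega, by omega, by omega, by omega,
    fun x hx => ?_⟩
  on_goal 3 => refine ⟨P.m + 2 * P.a + P.j, P.n, by omega, by omega, le_rfl, by omega,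
    fun x hx => ?_⟩
  on_goal 4 =>
    have hfc : (v ≤ P.t + P.a ∧ P.firstChild v = P.m + 2 + 2 * (v - P.t - 1)) ∨
        (P.t + P.a < v ∧ P.firstChild v = P.m + 2 * P.a + P.j + 2 * (v - P.t - P.a - 1)) := by
      unfold firstChild
      split_ifs <;> omega
    refine ⟨P.firstChild v, P.firstChild v + 2, by omega, by omega, by omega, by omega,
      fun x hx => ?_⟩
  all_goals
    rw [P.isDescendant_iff hv hx]
    have := P.par_spec x
    have := P.par_spec (P.par x)
    have := x.isLt
    omega

theorem parent_ne_of_isCycleSucc {x y z : Fin P.n} (hx : P.m ≤ x)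
    (hxy : IsCycleSucc P.n P.m x y) (hyz : IsCycleSucc P.n P.m y z) :
    P.parent x ≠ P.parent z := by
  have := P.constraints
  have := P.par_spec x
  have := P.par_spec z
  have := z.isLt
  unfold IsCycleSucc at hxy hyz
  rw [Ne, Fin.ext_iff]
  exact show P.par x ≠ P.par z by omega

theorem parent_eq_of_parent_parent_eq {x y : Fin P.n} (hx : P.m ≤ x) (hy : P.m ≤ y)
    (h : P.parent (P.parent x) = P.parent y) : P.parent x = P.parent y := by
  have := P.constraints
  have := P.par_spec x
  have := P.par_spec y
  have := P.par_spec (P.par x)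
  have h' : P.par (P.par x) = P.par y := congrArg Fin.val h
  exact Fin.ext (show P.par x = P.par y by omega)

def halin : HalinGraph (Fin P.n) :=
  P.isParentMap.halin P.parent_lt_m (by have := P.m_add_five_le; omega) P.three_le_ncDeg
    P.hasLeafInterval

theorem c4Free_halin : C4Free P.halin.graph :=
  P.isParentMap.c4Free_sup_leafCycle P.parent_lt_m P.m_add_five_le
    (fun _ _ _ hx => P.parent_ne_of_isCycleSucc hx)
    (fun _ _ hx hy => P.parent_eq_of_parent_parent_eq hx hy)

theorem eCount_halin : eCount P.halin.graph = P.n - 1 + (P.n - P.m) :=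
  P.isParentMap.eCount_sup_leafCycle P.parent_lt_m (by have := P.m_add_five_le; omega)

theorem exists_of_sixteen_le {n : ℕ} (hn : 16 ≤ n) :
    ∃ P : HalinC4Params, P.n = n ∧ P.n - 1 + (P.n - P.m) =
      if n % 3 = 1 then 5 * (n - 1) / 3
      else if n % 3 = 2 then 5 * (n - 2) / 3 + 1
      else 5 * (n - 3) / 3 + 3 := by
  obtain h | h | h : n % 3 = 1 ∨ n % 3 = 2 ∨ n % 3 = 0 := by omega
  · refine ⟨⟨n, 1, 2, (n - 4) / 3, 0, by omega, by omega, by omega⟩, rfl, ?_⟩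
    dsimp only [m]
    rw [if_pos h]
    omega
  · refine ⟨⟨n, 2, 2, (n - 11) / 3, 2, by omega, by omega, by omega⟩, rfl, ?_⟩
    dsimp only [m]
    rw [if_neg (by omega), if_pos h]
    omega
  · refine ⟨⟨n, 2, 3, (n - 12) / 3, 2, by omega, by omega, by omega⟩, rfl, ?_⟩
    dsimp only [m]
    rw [if_neg (by omega), if_neg (by omega)]
    omega

end HalinC4Params

/-- Lower bound: for every `n ≥ 16` there is an `n`-vertex `C₄`-free Halin graph with
`5(n-1)/3` edges if `n ≡ 1 (mod 3)`, `5(n-2)/3 + 1` edges if `n ≡ 2 (mod 3)`, and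
`5(n-3)/3 + 3` edges if `n ≡ 0 (mod 3)`. -/
theorem halin_turan_C4_lower (n : ℕ) (hn : 16 ≤ n) :
    ∃ H : HalinGraph (Fin n), C4Free H.graph ∧
      eCount H.graph =
        (if n % 3 = 1 then 5 * (n - 1) / 3
      else if n % 3 = 2 then 5 * (n - 2) / 3 + 1
      else 5 * (n - 3) / 3 + 3) := by
  obtain ⟨P, rfl, hP⟩ := HalinC4Params.exists_of_sixteen_le hn
  exact ⟨P.halin, P.c4Free_halin, P.eCount_halin.trans hP⟩
end
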